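/- With T_k and g as defined (g(1)=2, g(k)=((k+1)/2)(g(k-2)-1)+1 for odd k≥3), the chordal bipartite graph G_k = T_k^[k] satisfies box(G_k) > (k+1)/4. -/

import Mathlib

open SimpleGraph Set

/-- `f` given by endpoint functions `a`, `b` is an interval representation of `I`. -/
def IsIntervalRep {V : Type*} (I : SimpleGraph V) (a b : V → ℝ) : Prop :=
  (∀ v, a v ≤ b v) ∧
    ∀ u v, I.Adj u v ↔ u ≠ v ∧ (Set.Icc (a u) (b u) ∩ Set.Icc (a v) (b v)).Nonempty

/-- `I` is an interval graph. -/
def IsIntervalGraph {V : Type*} (I : SimpleGraph V) : Prop :=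
  ∃ a b : V → ℝ, IsIntervalRep I a b

/-- `G` is the intersection graph of axis-parallel `k`-dimensional boxes. -/
def IsBoxRep {V : Type*} (G : SimpleGraph V) (k : ℕ) : Prop :=
  ∃ lo hi : V → Fin k → ℝ, (∀ v i, lo v i ≤ hi v i) ∧
    ∀ u v, G.Adj u v ↔ u ≠ v ∧
      ∀ i, (Set.Icc (lo u i) (hi u i) ∩ Set.Icc (lo v i) (hi v i)).Nonempty

/-- The boxicity of a graph: the least `k` such that `G` is an intersection graph of
axis-parallel `k`-dimensional boxes. -/
noncomputable def boxicity {V : Type*} (G : SimpleGraph V) : ℕ :=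
  sInf {k | IsBoxRep G k}

/-- The `k`-th bipartite power of `G`: join vertices at odd distance at most `k`. -/
def bipartitePower {V : Type*} (G : SimpleGraph V) (k : ℕ) : SimpleGraph V :=
  SimpleGraph.fromRel (fun u v => Odd (G.dist u v) ∧ G.dist u v ≤ k)

/-- Add to `G` all edges between distinct vertices of `B`. -/
def addCliqueOn {V : Type*} (G : SimpleGraph V) (B : Set V) : SimpleGraph V :=
  SimpleGraph.fromRel (fun u v => G.Adj u v ∨ (u ∈ B ∧ v ∈ B))

/-- `{A, B}` is a bipartition of `G`. -/
def IsBipartitionOf {V : Type*} (G : SimpleGraph V) (A B : Set V) : Prop :=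
  Disjoint A B ∧ A ∪ B = Set.univ ∧ ∀ u v, G.Adj u v → (u ∈ A ↔ v ∈ B)

/-- `G` has no induced cycle of length greater than `m`. -/
def HasNoInducedCycleGT {V : Type*} (G : SimpleGraph V) (m : ℕ) : Prop :=
  ∀ n : ℕ, m < n → IsEmpty (SimpleGraph.cycleGraph n ↪g G)

/-- Chordal bipartite graphs: bipartite with no induced cycle of length > 4. -/
def ChordalBipartite {V : Type*} (G : SimpleGraph V) : Prop :=
  (∃ A B : Set V, IsBipartitionOf G A B) ∧ HasNoInducedCycleGT G 4

/-- The closed neighbourhood `N[v]`. -/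
def closedNbhd {V : Type*} (G : SimpleGraph V) (v : V) : Set V :=
  insert v (G.neighborSet v)

/-- Two vertices are compatible if one closed neighbourhood contains the other. -/
def Compatible {V : Type*} (G : SimpleGraph V) (u v : V) : Prop :=
  closedNbhd G u ⊆ closedNbhd G v ∨ closedNbhd G v ⊆ closedNbhd G u

/-- A vertex is simple if all pairs in its closed neighbourhood are compatible. -/
def IsSimpleVertex {V : Type*} (G : SimpleGraph V) (v : V) : Prop :=
  ∀ x ∈ closedNbhd G v, ∀ y ∈ closedNbhd G v, Compatible G x y

/-- The function `g` with `g 1 = 2` and `g k = ((k+1)/2) * (g (k-2) - 1) + 1` for odd `k ≥ 3`. -/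
def g : ℕ → ℕ
  | 0 => 1
  | 1 => 2
  | (n + 2) => ((n + 3) / 2) * (g n - 1) + 1

/-- Vertices of the tree `T_k`: the root `none`, and `some (i, j)` for the `j`-th vertex of
layer `i + 1`, for `i < k + 1` and `j < g k`. -/
abbrev TkVert (k : ℕ) : Type := Option (Fin (k + 1) × Fin (g k))

/-- The tree `T_k`: the root is adjacent to all of layer 1, and `v_{i,j}` is adjacent to
`v_{i+1,j}`. -/
def Tk (k : ℕ) : SimpleGraph (TkVert k) :=
  SimpleGraph.fromRel (fun u v =>
    (∃ j, u = none ∧ v = some (0, j)) ∨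
    (∃ (i i' : Fin (k + 1)) (j : Fin (g k)),
      (i' : ℕ) = (i : ℕ) + 1 ∧ u = some (i, j) ∧ v = some (i', j)))

/-- The side `A` of the bipartition of `T_k`: the vertices in odd-numbered layers
(the root being in layer 0, and `some (i, j)` in layer `i + 1`). -/
def TkA (k : ℕ) : Set (TkVert k) :=
  {v | ∃ (i : Fin (k + 1)) (j : Fin (g k)), v = some (i, j) ∧ Even (i : ℕ)}

/-
A non-edge `xy` of a box representation is separated in some coordinate, where the
interval of `x` lies entirely to the left or entirely to the right of that of `y`. For a
fixed coordinate each of these two relations is a Ferrers relation, so a `d`-dimensional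
representation yields `2d` Ferrers relations that contain no edge and together cover all
non-edges between two families of vertices.

In `T_k` with `k = 2ℓ + 1`, put `x (j, s) = v_{2s+1, j}` and `y (j, t) = v_{k+1-2t, j}` for
`s, t ≤ ℓ`; in `G_k` these are adjacent iff `j = j'` or `s < t`. By pigeonhole one relation
covers a top-level non-edge `x (j, ℓ) y (c j, ℓ)` for `g (2ℓ - 1)` of the `g (2ℓ + 1)`
columns `j`, and the Ferrers property forbids it to cover any lower non-edge among those
columns. By induction on `ℓ` at least `ℓ + 2` relations are needed, so
`2 box(G_k) ≥ ℓ + 2`.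
-/

def IsFerrers {α β : Type*} (R : α → β → Prop) : Prop :=
  ∀ ⦃p q p' q'⦄, R p q → R p' q' → R p q' ∨ R p' q

lemma IsFerrers.not_rel_of_rel {α β : Type*} {R : α → β → Prop} (hR : IsFerrers R)
    {p q p' q'} (h : R p' q') (hpq' : ¬ R p q') (hp'q : ¬ R p' q) : ¬ R p q :=
  fun hpq => (hR hpq h).elim hpq' hp'q

lemma isFerrers_lt {α β γ : Type*} [LinearOrder γ] (a : α → γ) (b : β → γ) :
    IsFerrers fun p q => a p < b q := by
  intro p q p' q' h h'
  rcases le_total (a p) (a p') with hp | hp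
  · exact .inl (hp.trans_lt h')
  · exact .inr (hp.trans_lt h)

lemma isFerrers_gt {α β γ : Type*} [LinearOrder γ] (a : α → γ) (b : β → γ) :
    IsFerrers fun p q => b q < a p :=
  isFerrers_lt (γ := γᵒᵈ) a b

lemma g_two_mul_add_three (ℓ : ℕ) : g (2 * ℓ + 3) = (ℓ + 2) * (g (2 * ℓ + 1) - 1) + 1 := by
  show (2 * ℓ + 1 + 3) / 2 * (g (2 * ℓ + 1) - 1) + 1 = _
  rw [show (2 * ℓ + 1 + 3) / 2 = ℓ + 2 by omega]

lemma two_le_g_two_mul_add_one : ∀ ℓ, 2 ≤ g (2 * ℓ + 1)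
  | 0 => le_rfl
  | ℓ + 1 => by
    rw [show 2 * (ℓ + 1) + 1 = 2 * ℓ + 3 by ring, g_two_mul_add_three]
    have := Nat.mul_le_mul (show 1 ≤ ℓ + 2 by omega)
      (show 1 ≤ g (2 * ℓ + 1) - 1 by have := two_le_g_two_mul_add_one ℓ; omega)
    omega

theorem add_two_le_card_of_ferrers_cover {ι κ : Type*} [DecidableEq κ] (ℓ : ℕ)
    (J : Finset ι) (hJ : g (2 * ℓ + 1) ≤ J.card) (I : Finset κ)
    (R : κ → ι × ℕ → ι × ℕ → Prop) (hR : ∀ i ∈ I, IsFerrers (R i))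
    (havoid : ∀ i ∈ I, ∀ j ∈ J, ∀ j' ∈ J, ∀ s ≤ ℓ, ∀ t ≤ ℓ, (j = j' ∨ s < t) →
      ¬ R i (j, s) (j', t))
    (hcover : ∀ j ∈ J, ∀ j' ∈ J, j ≠ j' → ∀ s ≤ ℓ, ∀ t ≤ s, ∃ i ∈ I, R i (j, s) (j', t)) :
    ℓ + 2 ≤ I.card := by
  induction ℓ generalizing J I with
  | zero =>
    have hJ₂ : 1 < J.card := by simp only [g] at hJ; omega
    obtain ⟨j₀, hj₀, j₁, hj₁, hne⟩ := Finset.one_lt_card.mp hJ₂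
    obtain ⟨i₀, hi₀, h₀⟩ := hcover j₀ hj₀ j₁ hj₁ hne 0 le_rfl 0 le_rfl
    obtain ⟨i₁, hi₁, h₁⟩ := hcover j₁ hj₁ j₀ hj₀ hne.symm 0 le_rfl 0 le_rfl
    have hi : i₀ ≠ i₁ := by
      rintro rfl
      exact (hR i₀ hi₀).not_rel_of_rel h₁ (havoid i₀ hi₀ j₀ hj₀ j₀ hj₀ 0 le_rfl 0 le_rfl (.inl rfl))
        (havoid i₀ hi₀ j₁ hj₁ j₁ hj₁ 0 le_rfl 0 le_rfl (.inl rfl)) h₀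
    exact Finset.one_lt_card.mpr ⟨i₀, hi₀, i₁, hi₁, hi⟩
  | succ ℓ ih =>
    have hJ₂ : 1 < J.card := by have := two_le_g_two_mul_add_one (ℓ + 1); omega
    rw [show 2 * (ℓ + 1) + 1 = 2 * ℓ + 3 by ring] at hJ
    by_contra! hI
    have htop : ∀ j ∈ J, ∃ i c, i ∈ I ∧ c ∈ J ∧ R i (j, ℓ + 1) (c, ℓ + 1) := by
      intro j hj
      obtain ⟨c, hc, hcj⟩ := Finset.exists_mem_ne hJ₂ j
      obtain ⟨i, hi, h⟩ := hcover j hj c hc hcj.symm (ℓ + 1) le_rfl (ℓ + 1) le_rfl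
      exact ⟨i, c, hi, hc, h⟩
    obtain ⟨i, c₀, -⟩ := htop _ (Finset.card_pos.mp (by omega)).choose_spec
    have : Nonempty κ := ⟨i⟩
    have : Nonempty ι := ⟨c₀⟩
    choose! f c hf hc hfc using htop
    have hfib : I.card * (g (2 * ℓ + 1) - 1) < J.card := by
      have := Nat.mul_le_mul_right (g (2 * ℓ + 1) - 1) (Nat.le_of_lt_succ hI)
      have := g_two_mul_add_three ℓ
      omega
    obtain ⟨i₀, hi₀, hW⟩ := Finset.exists_lt_card_fiber_of_mul_lt_card_of_maps_to hf hfib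
    set W := J.filter (f · = i₀)
    have hWJ : W ⊆ J := Finset.filter_subset _ _
    -- `i₀` covers `x (b, ℓ+1) y (c b, ℓ+1)`, so covering `x (a, s) y (b, t)` too would
    -- make it cover the edge `x (a, s) y (c b, ℓ+1)` or the edge `x (b, ℓ+1) y (b, t)`.
    have hexcl : ∀ a ∈ W, ∀ b ∈ W, ∀ s ≤ ℓ, ∀ t ≤ ℓ, ¬ R i₀ (a, s) (b, t) := by
      intro a ha b hb s hs t ht
      obtain ⟨hbJ, rfl⟩ := Finset.mem_filter.mp hb
      exact (hR _ hi₀).not_rel_of_rel (hfc b hbJ)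
        (havoid _ hi₀ a (hWJ ha) (c b) (hc b hbJ) s (by omega) (ℓ + 1) le_rfl (.inr (by omega)))
        (havoid _ hi₀ b hbJ b hbJ (ℓ + 1) le_rfl t (by omega) (.inl rfl))
    have := ih W (by omega) (I.erase i₀) (fun i hi => hR i (Finset.mem_of_mem_erase hi))
      (fun i hi j hj j' hj' s hs t ht =>
        havoid i (Finset.mem_of_mem_erase hi) j (hWJ hj) j' (hWJ hj') s (by omega) t (by omega))
      (fun j hj j' hj' hjj s hs t hts => by
        obtain ⟨i, hi, h⟩ := hcover j (hWJ hj) j' (hWJ hj') hjj s (by omega) t hts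
        refine ⟨i, Finset.mem_erase.mpr ⟨?_, hi⟩, h⟩
        rintro rfl
        exact hexcl j hj j' hj' s hs t (hts.trans hs) h)
    rw [Finset.card_erase_of_mem hi₀] at this
    omega

namespace SimpleGraph

variable {V : Type*} {G : SimpleGraph V}

lemma exists_walk_length_eq_of_adj_succ (x : ℕ → V) (a : ℕ) :
    ∀ n, (∀ i < n, G.Adj (x (a + i)) (x (a + i + 1))) →
      ∃ p : G.Walk (x a) (x (a + n)), p.length = n
  | 0, _ => ⟨.nil, rfl⟩
  | n + 1, h => by
    obtain ⟨p, hp⟩ := exists_walk_length_eq_of_adj_succ x a n fun i hi => h i (by omega)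
    exact ⟨p.concat (h n (by omega)), by rw [Walk.length_concat, hp]⟩

lemma Walk.abs_sub_le_length {f : V → ℤ} (hf : ∀ u v, G.Adj u v → |f u - f v| ≤ 1) :
    ∀ {u v : V} (p : G.Walk u v), |f u - f v| ≤ p.length
  | _, _, .nil => by simp
  | u, v, .cons (v := w) h p => by
    have := p.abs_sub_le_length hf
    rw [Walk.length_cons]
    calc |f u - f v| ≤ |f u - f w| + |f w - f v| := abs_sub_le _ _ _
      _ ≤ _ := by push_cast; linarith [hf u w h]

lemma Reachable.abs_sub_le_dist {f : V → ℤ} (hf : ∀ u v, G.Adj u v → |f u - f v| ≤ 1)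
    {u v : V} (h : G.Reachable u v) : |f u - f v| ≤ G.dist u v := by
  obtain ⟨p, hp⟩ := h.exists_walk_length_eq_dist
  exact hp ▸ p.abs_sub_le_length hf

end SimpleGraph

lemma bipartitePower_adj {V : Type*} {G : SimpleGraph V} {n : ℕ} {u v : V} :
    (bipartitePower G n).Adj u v ↔ Odd (G.dist u v) ∧ G.dist u v ≤ n := by
  rw [bipartitePower, fromRel_adj, dist_comm (u := v), or_self, and_iff_right_iff_imp]
  rintro ⟨hodd, -⟩ rfl
  simp at hodd

namespace Tk

variable {k : ℕ}

-- `leg j i` is the paper's `v_{i,j}` (for `i ≤ k + 1`), and `leg j 0 = v_0`.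
open Fin.NatCast in
def leg (j : Fin (g k)) : ℕ → TkVert k
  | 0 => none
  | n + 1 => some (n, j)

-- Distance from the root, counted positively on leg `j` and negatively on the other legs.
-- It changes by at most one along an edge, which bounds distances from below.
def legCoord (j : Fin (g k)) : TkVert k → ℤ
  | none => 0
  | some (i, j') => if j' = j then i.val + 1 else -(i.val + 1)

lemma abs_legCoord_sub_le_one (j : Fin (g k)) (u v : TkVert k) (h : (Tk k).Adj u v) :
    |legCoord j u - legCoord j v| ≤ 1 := by
  wlog huv : (∃ j', u = none ∧ v = some (0, j')) ∨ ∃ (i i' : Fin (k + 1)) (j' : Fin (g k)),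
      (i' : ℕ) = i + 1 ∧ u = some (i, j') ∧ v = some (i', j') generalizing u v
  · rw [abs_sub_comm]
    exact this v u h.symm (((fromRel_adj _ _ _).mp h).2.resolve_left huv)
  rcases huv with ⟨j', rfl, rfl⟩ | ⟨i, i', j', hi, rfl, rfl⟩
  · simp only [legCoord]
    split_ifs <;> simp
  · simp only [legCoord]
    split_ifs <;> simp [hi]

lemma legCoord_leg (j j' : Fin (g k)) {n : ℕ} (hn : n ≤ k + 1) :
    legCoord j (leg j' n) = if j' = j then (n : ℤ) else -n := by
  cases n with
  | zero => simp [leg, legCoord]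
  | succ n => simp [leg, legCoord, Fin.val_natCast, Nat.mod_eq_of_lt (show n < k + 1 by omega)]

lemma adj_leg_succ (j : Fin (g k)) {n : ℕ} (hn : n ≤ k) : (Tk k).Adj (leg j n) (leg j (n + 1)) := by
  rw [Tk, fromRel_adj]
  cases n with
  | zero => exact ⟨by simp [leg], .inl (.inl ⟨j, rfl, by simp [leg]⟩)⟩
  | succ n =>
    refine ⟨?_, .inl (.inr ⟨_, _, j, ?_, rfl, rfl⟩)⟩
    all_goals simp [leg, Fin.ext_iff, Fin.val_natCast, Nat.mod_eq_of_lt,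
      show n < k + 1 by omega, show n + 1 < k + 1 by omega]

lemma leg_ne_leg_of_ne {j j' : Fin (g k)} (hjj : j ≠ j') {a b : ℕ} (ha : a ≠ 0) :
    leg j a ≠ leg j' b := by
  cases a <;> cases b <;> simp_all [leg]

lemma exists_walk_leg (j : Fin (g k)) {a b : ℕ} (hab : a ≤ b) (hb : b ≤ k + 1) :
    ∃ p : (Tk k).Walk (leg j a) (leg j b), p.length = b - a := by
  obtain ⟨n, rfl⟩ := Nat.exists_eq_add_of_le hab
  rw [Nat.add_sub_cancel_left]
  exact exists_walk_length_eq_of_adj_succ (leg j) a n fun i hi => adj_leg_succ j (by omega)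

lemma dist_leg_leg (j : Fin (g k)) {a b : ℕ} (hab : a ≤ b) (hb : b ≤ k + 1) :
    (Tk k).dist (leg j a) (leg j b) = b - a := by
  obtain ⟨p, hp⟩ := exists_walk_leg j hab hb
  refine le_antisymm (hp ▸ dist_le p) ?_
  have := p.reachable.abs_sub_le_dist (abs_legCoord_sub_le_one j)
  rw [legCoord_leg j j (by omega), legCoord_leg j j hb] at this
  simp only [if_true, abs_le] at this
  omega

lemma dist_leg_leg_of_ne {j j' : Fin (g k)} (hjj : j ≠ j') {a b : ℕ} (ha : a ≤ k + 1)
    (hb : b ≤ k + 1) : (Tk k).dist (leg j a) (leg j' b) = a + b := by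
  obtain ⟨p, hp⟩ : ∃ p : (Tk k).Walk none (leg j a), p.length = a :=
    exists_walk_leg j (Nat.zero_le a) ha
  obtain ⟨q, hq⟩ : ∃ q : (Tk k).Walk none (leg j' b), q.length = b :=
    exists_walk_leg j' (Nat.zero_le b) hb
  refine le_antisymm ?_ ?_
  · have := dist_le (p.reverse.append q)
    rw [Walk.length_append, Walk.length_reverse, hp, hq] at this
    omega
  · have := (p.reverse.append q).reachable.abs_sub_le_dist (abs_legCoord_sub_le_one j)
    rw [legCoord_leg j j ha, legCoord_leg j j' hb] at this
    simp only [if_true, if_neg hjj.symm, abs_le] at this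
    omega

end Tk

lemma Set.Icc_inter_Icc_nonempty_iff {α : Type*} [LinearOrder α] {a b c d : α}
    (hab : a ≤ b) (hcd : c ≤ d) : (Icc a b ∩ Icc c d).Nonempty ↔ a ≤ d ∧ c ≤ b := by
  rw [Icc_inter_Icc, nonempty_Icc, sup_le_iff, le_inf_iff, le_inf_iff]
  tauto

section Boxicity

variable {V : Type*} {G : SimpleGraph V}

lemma IsBoxRep.of_fintype {ι : Type*} [Fintype ι] (lo hi : V → ι → ℝ)
    (hle : ∀ v i, lo v i ≤ hi v i)
    (hadj : ∀ u v, G.Adj u v ↔ u ≠ v ∧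
      ∀ i, (Icc (lo u i) (hi u i) ∩ Icc (lo v i) (hi v i)).Nonempty) :
    IsBoxRep G (Fintype.card ι) := by
  let e := (Fintype.equivFin ι).symm
  refine ⟨fun v d => lo v (e d), fun v d => hi v (e d), fun v d => hle v (e d), fun u v => ?_⟩
  rw [hadj, e.symm.forall_congr_left]
  simp

lemma exists_isBoxRep [Finite V] (G : SimpleGraph V) : ∃ m, IsBoxRep G m := by
  classical
  have := Fintype.ofFinite V
  -- One coordinate per non-adjacent pair `(p, q)`: there `p` gets `[0, 0]`, `q` gets
  -- `[1, 1]` and every other vertex `[0, 1]`.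
  let sep : V × V → Prop := fun e => e.1 ≠ e.2 ∧ ¬ G.Adj e.1 e.2
  let lo : V → V × V → ℝ := fun v e => if sep e ∧ v = e.2 then 1 else 0
  let hi : V → V × V → ℝ := fun v e => if sep e ∧ v = e.1 then 0 else 1
  have hle : ∀ v e, lo v e ≤ hi v e := by
    rintro v ⟨p, q⟩
    simp only [lo, hi, sep]
    split_ifs <;> grind
  refine ⟨_, IsBoxRep.of_fintype lo hi hle fun u v => ?_⟩
  simp only [Icc_inter_Icc_nonempty_iff (hle _ _) (hle _ _)]
  constructor
  · rintro huv
    refine ⟨huv.ne, fun ⟨p, q⟩ => ?_⟩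
    simp only [lo, hi, sep]
    split_ifs <;> grind [huv.symm]
  · rintro ⟨huv, h⟩
    by_contra hn
    have := h (u, v)
    simp only [lo, hi, sep] at this
    grind

lemma IsBoxRep.exists_ferrers_cover {m : ℕ} (h : IsBoxRep G m) {α β : Type*}
    (x : α → V) (y : β → V) :
    ∃ R : Fin m ⊕ Fin m → α → β → Prop, (∀ i, IsFerrers (R i)) ∧
      (∀ i p q, G.Adj (x p) (y q) → ¬ R i p q) ∧
      (∀ p q, x p ≠ y q → ¬ G.Adj (x p) (y q) → ∃ i, R i p q) := by
  obtain ⟨lo, hi, hle, hadj⟩ := h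
  have hsep : ∀ u v, G.Adj u v ↔ u ≠ v ∧ ∀ d, ¬ (hi v d < lo u d ∨ hi u d < lo v d) := by
    intro u v
    simp only [hadj, Icc_inter_Icc_nonempty_iff (hle _ _) (hle _ _), not_or, not_lt]
  refine ⟨Sum.elim (fun d p q => hi (x p) d < lo (y q) d) (fun d p q => hi (y q) d < lo (x p) d),
    ?_, ?_, fun p q hne hn => ?_⟩
  · rintro (d | d)
    · exact isFerrers_lt _ _
    · exact isFerrers_gt _ _
  · rintro (d | d) p q hpq <;> have := ((hsep _ _).mp hpq).2 d <;> grind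
  · obtain ⟨d, hd⟩ : ∃ d, hi (x p) d < lo (y q) d ∨ hi (y q) d < lo (x p) d := by
      by_contra! hd
      exact hn ((hsep _ _).mpr ⟨hne, fun d => by grind⟩)
    rcases hd with hd | hd
    · exact ⟨.inl d, hd⟩
    · exact ⟨.inr d, hd⟩

lemma lt_boxicity [Finite V] {n : ℕ} (h : ∀ m, IsBoxRep G m → n < m) : n < boxicity G :=
  h _ (Nat.sInf_mem (exists_isBoxRep G))

end Boxicity

open Tk in
lemma bipartitePower_Tk_adj_leg_leg {ℓ s t : ℕ} (hs : s ≤ ℓ) (ht : t ≤ ℓ)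
    (j j' : Fin (g (2 * ℓ + 1))) :
    (bipartitePower (Tk (2 * ℓ + 1)) (2 * ℓ + 1)).Adj (leg j (2 * s + 1))
      (leg j' (2 * ℓ + 2 - 2 * t)) ↔ j = j' ∨ s < t := by
  rw [bipartitePower_adj]
  by_cases hjj : j = j'
  · subst hjj
    simp only [true_or, iff_true]
    rcases le_total (2 * s + 1) (2 * ℓ + 2 - 2 * t) with h | h
    · rw [dist_leg_leg j h (by omega)]
      exact ⟨⟨ℓ - s - t, by omega⟩, by omega⟩
    · rw [dist_comm, dist_leg_leg j h (by omega)]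
      exact ⟨⟨s + t - ℓ - 1, by omega⟩, by omega⟩
  · rw [dist_leg_leg_of_ne hjj (by omega) (by omega)]
    simp only [hjj, false_or]
    exact ⟨fun h => by omega, fun h => ⟨⟨ℓ + 1 + s - t, by omega⟩, by omega⟩⟩

theorem stmt10 (k : ℕ) (hk : Odd k) :
    (k + 1) / 4 < boxicity (bipartitePower (Tk k) k) := by
  obtain ⟨ℓ, rfl⟩ := hk
  refine lt_boxicity fun m hm => ?_
  obtain ⟨R, hR, havoid, hcover⟩ := hm.exists_ferrers_cover
    (fun p : Fin (g (2 * ℓ + 1)) × ℕ => Tk.leg p.1 (2 * p.2 + 1))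
    (fun q : Fin (g (2 * ℓ + 1)) × ℕ => Tk.leg q.1 (2 * ℓ + 2 - 2 * q.2))
  have := add_two_le_card_of_ferrers_cover ℓ Finset.univ (by simp) Finset.univ R
    (fun i _ => hR i)
    (fun i _ j _ j' _ s hs t ht hst =>
      havoid i (j, s) (j', t) ((bipartitePower_Tk_adj_leg_leg hs ht j j').mpr hst))
    (fun j _ j' _ hjj s hs t hts => by
      obtain ⟨i, hi⟩ := hcover (j, s) (j', t) (Tk.leg_ne_leg_of_ne hjj (by omega)) <| by
        simpa [bipartitePower_Tk_adj_leg_leg hs (hts.trans hs), hjj] using hts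
      exact ⟨i, Finset.mem_univ i, hi⟩)
  simp only [Finset.card_univ, Fintype.card_sum, Fintype.card_fin] at this
  omega
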